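/- (Conservativeness) Given a PEG G, a parsing expression p and a subject xy: if G[p] xy ⇝ X in the original PEG semantics, where X is either fail or a pair (y, x'), then G[p] xy L ⇝ X in the left-recursive extended semantics, for any memoization table L such that (A, w) ∉ L for every non-terminal A and subject w such that G[A] w appears on the left-hand side of a node of the proof tree of G[p] xy ⇝ X. -/

import Mathlib

/-- Parsing expressions over non-terminals `N` and terminals `T`. -/
inductive PExp (N T : Type) : Type where
  | empty : PExp N T
  | term : T → PExp N T
  | var : N → PExp N T
  | seq : PExp N T → PExp N T → PExp N T
  | choice : PExp N T → PExp N T → PExp N T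
  | star : PExp N T → PExp N T
  | nott : PExp N T → PExp N T

/-- A PEG: a rule for every non-terminal and a starting expression.
(A PEG whose `prod` is a total function is a closed PEG.) -/
structure PEG (N T : Type) where
  prod : N → PExp N T
  start : PExp N T

/-- Symbols of parse strings: terminals and tagged brackets `A[...]`. -/
inductive PSym (N T : Type) : Type where
  | t : T → PSym N T
  | node : N → List (PSym N T) → PSym N T

/-- Parse strings. -/
abbrev PStr (N T : Type) := List (PSym N T)

/-- Result of a match: `fail`, or a pair (remaining suffix, parse string). -/
inductive Res (N T : Type) : Type where
  | fail : Res N T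
  | ok : List T → PStr N T → Res N T
/-- Memoization tables: partial functions from (non-terminal, subject) to results. -/
abbrev Memo (N T : Type) := N → List T → Option (Res N T)

/-- `L[(A,s) ↦ r]`. -/
def Memo.update {N T : Type} [DecidableEq N] [DecidableEq T]
    (L : Memo N T) (A : N) (s : List T) (r : Res N T) : Memo N T :=
  fun B u => if B = A ∧ u = s then some r else L B u

/-- The empty memoization table. -/
def Memo.empty {N T : Type} : Memo N T := fun _ _ => none
mutual
/-- The left-recursive extended semantics `G[p] s L ⇝ r`. -/
inductive LMatch {N T : Type} [DecidableEq N] [DecidableEq T] (G : PEG N T) :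
    PExp N T → List T → Memo N T → Res N T → Prop where
  | empty1 : LMatch G .empty s L (.ok s [])
  | char1 : LMatch G (.term a) (a :: s) L (.ok s [.t a])
  | char2 : b ≠ a → LMatch G (.term b) (a :: s) L .fail
  | char3 : LMatch G (.term a) [] L .fail
  | lvar1 : L A s = none →
      LMatch G (G.prod A) s (Memo.update L A s .fail) (.ok s1 t1) →
      Inc G A s (Memo.update L A s (.ok s1 t1)) (.ok s2 t2) →
      LMatch G (.var A) s L (.ok s2 [.node A t2])
  | lvar2 : L A s = none →
      LMatch G (G.prod A) s (Memo.update L A s .fail) .fail →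
      LMatch G (.var A) s L .fail
  | lvar3 : L A s = some .fail → LMatch G (.var A) s L .fail
  | lvar4 : L A s = some (.ok y t) → LMatch G (.var A) s L (.ok y [.node A t])
  | con1 : LMatch G p1 s L (.ok s1 t1) → LMatch G p2 s1 L (.ok s2 t2) →
      LMatch G (.seq p1 p2) s L (.ok s2 (t1 ++ t2))
  | con2 : LMatch G p1 s L (.ok s1 t1) → LMatch G p2 s1 L .fail →
      LMatch G (.seq p1 p2) s L .fail
  | con3 : LMatch G p1 s L .fail → LMatch G (.seq p1 p2) s L .fail
  | ord1 : LMatch G p1 s L (.ok s1 t1) → LMatch G (.choice p1 p2) s L (.ok s1 t1)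
  | ord2 : LMatch G p1 s L .fail → LMatch G p2 s L .fail →
      LMatch G (.choice p1 p2) s L .fail
  | ord3 : LMatch G p1 s L .fail → LMatch G p2 s L (.ok s1 t1) →
      LMatch G (.choice p1 p2) s L (.ok s1 t1)
  | not1 : LMatch G p s L .fail → LMatch G (.nott p) s L (.ok s [])
  | not2 : LMatch G p s L (.ok s1 t1) → LMatch G (.nott p) s L .fail
  | rep1 : LMatch G p s L .fail → LMatch G (.star p) s L (.ok s [])
  | rep2 : LMatch G p s L (.ok s1 t1) → LMatch G (.star p) s1 L (.ok s2 t2) →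
      LMatch G (.star p) s L (.ok s2 (t1 ++ t2))

/-- The auxiliary bound-increasing relation `G[P(A)] s L ⇝INC r`. -/
inductive Inc {N T : Type} [DecidableEq N] [DecidableEq T] (G : PEG N T) :
    N → List T → Memo N T → Res N T → Prop where
  | inc1 : y ≠ [] →
      LMatch G (G.prod A) (x ++ y ++ z ++ w)
        (Memo.update L A (x ++ y ++ z ++ w) (.ok (y ++ z ++ w) t1)) (.ok (z ++ w) t2) →
      Inc G A (x ++ y ++ z ++ w)
        (Memo.update L A (x ++ y ++ z ++ w) (.ok (z ++ w) t2)) (.ok w t3) →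
      Inc G A (x ++ y ++ z ++ w)
        (Memo.update L A (x ++ y ++ z ++ w) (.ok (y ++ z ++ w) t1)) (.ok w t3)
  | inc2 : L A s = some r → LMatch G (G.prod A) s L .fail → Inc G A s L r
  | inc3 :
      LMatch G (G.prod A) (x ++ y ++ z)
        (Memo.update L A (x ++ y ++ z) (.ok z t1)) (.ok (y ++ z) t2) →
      Inc G A (x ++ y ++ z)
        (Memo.update L A (x ++ y ++ z) (.ok z t1)) (.ok z t1)
end

/-- Derivations (proof trees) of the original PEG semantics `G[p] s ⇝ r`. -/
inductive MatchD {N T : Type} (G : PEG N T) : PExp N T → List T → Res N T → Type where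
  | empty1 : MatchD G .empty s (.ok s [])
  | char1 : MatchD G (.term a) (a :: s) (.ok s [.t a])
  | char2 : b ≠ a → MatchD G (.term b) (a :: s) .fail
  | char3 : MatchD G (.term a) [] .fail
  | var1 : MatchD G (G.prod A) s (.ok s1 t) → MatchD G (.var A) s (.ok s1 [.node A t])
  | var2 : MatchD G (G.prod A) s .fail → MatchD G (.var A) s .fail
  | con1 : MatchD G p1 s (.ok s1 t1) → MatchD G p2 s1 (.ok s2 t2) →
      MatchD G (.seq p1 p2) s (.ok s2 (t1 ++ t2))
  | con2 : MatchD G p1 s (.ok s1 t1) → MatchD G p2 s1 .fail → MatchD G (.seq p1 p2) s .fail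
  | con3 : MatchD G p1 s .fail → MatchD G (.seq p1 p2) s .fail
  | ord1 : MatchD G p1 s (.ok s1 t1) → MatchD G (.choice p1 p2) s (.ok s1 t1)
  | ord2 : MatchD G p1 s .fail → MatchD G p2 s .fail → MatchD G (.choice p1 p2) s .fail
  | ord3 : MatchD G p1 s .fail → MatchD G p2 s (.ok s1 t1) → MatchD G (.choice p1 p2) s (.ok s1 t1)
  | not1 : MatchD G p s .fail → MatchD G (.nott p) s (.ok s [])
  | not2 : MatchD G p s (.ok s1 t1) → MatchD G (.nott p) s .fail
  | rep1 : MatchD G p s .fail → MatchD G (.star p) s (.ok s [])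
  | rep2 : MatchD G p s (.ok s1 t1) → MatchD G (.star p) s1 (.ok s2 t2) →
      MatchD G (.star p) s (.ok s2 (t1 ++ t2))

/-- `d.uses A w` holds iff `G[A] w` appears on the left-hand side of some node
of the proof tree `d`. -/
def MatchD.uses {N T : Type} {G : PEG N T} :
    ∀ {p : PExp N T} {s : List T} {r : Res N T}, MatchD G p s r → N → List T → Prop
  | _, _, _, .empty1, _, _ => False
  | _, _, _, .char1, _, _ => False
  | _, _, _, .char2 _, _, _ => False
  | _, _, _, .char3, _, _ => False
  | _, s, _, .var1 (A := A) d, B, w => (B = A ∧ w = s) ∨ d.uses B w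
  | _, s, _, .var2 (A := A) d, B, w => (B = A ∧ w = s) ∨ d.uses B w
  | _, _, _, .con1 d1 d2, B, w => d1.uses B w ∨ d2.uses B w
  | _, _, _, .con2 d1 d2, B, w => d1.uses B w ∨ d2.uses B w
  | _, _, _, .con3 d1, B, w => d1.uses B w
  | _, _, _, .ord1 d1, B, w => d1.uses B w
  | _, _, _, .ord2 d1 d2, B, w => d1.uses B w ∨ d2.uses B w
  | _, _, _, .ord3 d1 d2, B, w => d1.uses B w ∨ d2.uses B w
  | _, _, _, .not1 d1, B, w => d1.uses B w
  | _, _, _, .not2 d1, B, w => d1.uses B w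
  | _, _, _, .rep1 d1, B, w => d1.uses B w
  | _, _, _, .rep2 d1 d2, B, w => d1.uses B w ∨ d2.uses B w

/-! A derivation of the original semantics is uniquely determined by its judgement, and a
derivation of `G[P(A)] s` cannot contain a node `G[A] s`: its subtree would be a strictly
smaller derivation of the same judgement. Hence at a node `G[A] s` the entry `(A, s)` that the
extended semantics seeds into the table is never consulted while re-running `P(A)` on `s`:
evaluating it under the seed `fail` reproduces the original result, evaluating it again under
that result reproduces it once more, and since this makes no progress, `inc.3` stops the
bound-increasing loop at once. Every other rule threads `L` unchanged. -/
namespace MatchD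

variable {N T : Type} {G : PEG N T}

def size : ∀ {p : PExp N T} {s : List T} {r : Res N T}, MatchD G p s r → ℕ
  | _, _, _, .empty1 | _, _, _, .char1 | _, _, _, .char2 _ | _, _, _, .char3 => 1
  | _, _, _, .var1 d | _, _, _, .var2 d | _, _, _, .con3 d | _, _, _, .ord1 d
  | _, _, _, .not1 d | _, _, _, .not2 d | _, _, _, .rep1 d => d.size + 1
  | _, _, _, .con1 d₁ d₂ | _, _, _, .con2 d₁ d₂ | _, _, _, .ord2 d₁ d₂
  | _, _, _, .ord3 d₁ d₂ | _, _, _, .rep2 d₁ d₂ => d₁.size + d₂.size + 1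

theorem unique {p : PExp N T} {s : List T} {r₁ r₂ : Res N T}
    (d₁ : MatchD G p s r₁) (d₂ : MatchD G p s r₂) : r₁ = r₂ ∧ d₁ ≍ d₂ := by
  induction d₁ generalizing r₂ with
  | empty1 | char3 => cases d₂; simp
  | char1 | char2 => cases d₂ <;> first | contradiction | simp
  | var1 _ ih => cases d₂ with
    | var1 d₂ => obtain ⟨⟨⟩, ⟨⟩⟩ := ih d₂; simp
    | var2 d₂ => cases (ih d₂).1
  | var2 _ ih => cases d₂ with
    | var1 d₂ => cases (ih d₂).1
    | var2 d₂ => obtain ⟨-, ⟨⟩⟩ := ih d₂; simp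
  | con1 _ _ iha ihb => cases d₂ with
    | con1 a₂ b₂ => obtain ⟨⟨⟩, ⟨⟩⟩ := iha a₂; obtain ⟨⟨⟩, ⟨⟩⟩ := ihb b₂; simp
    | con2 a₂ b₂ => obtain ⟨⟨⟩, ⟨⟩⟩ := iha a₂; cases (ihb b₂).1
    | con3 a₂ => cases (iha a₂).1
  | con2 _ _ iha ihb => cases d₂ with
    | con1 a₂ b₂ => obtain ⟨⟨⟩, ⟨⟩⟩ := iha a₂; cases (ihb b₂).1
    | con2 a₂ b₂ => obtain ⟨⟨⟩, ⟨⟩⟩ := iha a₂; obtain ⟨-, ⟨⟩⟩ := ihb b₂; simp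
    | con3 a₂ => cases (iha a₂).1
  | con3 _ iha => cases d₂ with
    | con1 a₂ _ | con2 a₂ _ => cases (iha a₂).1
    | con3 a₂ => obtain ⟨-, ⟨⟩⟩ := iha a₂; simp
  | ord1 _ iha => cases d₂ with
    | ord1 a₂ => obtain ⟨⟨⟩, ⟨⟩⟩ := iha a₂; simp
    | ord2 a₂ _ | ord3 a₂ _ => cases (iha a₂).1
  | ord2 _ _ iha ihb => cases d₂ with
    | ord1 a₂ => cases (iha a₂).1
    | ord2 a₂ b₂ => obtain ⟨-, ⟨⟩⟩ := iha a₂; obtain ⟨-, ⟨⟩⟩ := ihb b₂; simp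
    | ord3 a₂ b₂ => cases (ihb b₂).1
  | ord3 _ _ iha ihb => cases d₂ with
    | ord1 a₂ => cases (iha a₂).1
    | ord2 a₂ b₂ => cases (ihb b₂).1
    | ord3 a₂ b₂ => obtain ⟨-, ⟨⟩⟩ := iha a₂; obtain ⟨⟨⟩, ⟨⟩⟩ := ihb b₂; simp
  | not1 _ iha => cases d₂ with
    | not1 a₂ => obtain ⟨-, ⟨⟩⟩ := iha a₂; simp
    | not2 a₂ => cases (iha a₂).1
  | not2 _ iha => cases d₂ with
    | not1 a₂ => cases (iha a₂).1
    | not2 a₂ => obtain ⟨⟨⟩, ⟨⟩⟩ := iha a₂; simp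
  | rep1 _ iha => cases d₂ with
    | rep1 a₂ => obtain ⟨-, ⟨⟩⟩ := iha a₂; simp
    | rep2 a₂ b₂ => cases (iha a₂).1
  | rep2 _ _ iha ihb => cases d₂ with
    | rep1 a₂ => cases (iha a₂).1
    | rep2 a₂ b₂ => obtain ⟨⟨⟩, ⟨⟩⟩ := iha a₂; obtain ⟨⟨⟩, ⟨⟩⟩ := ihb b₂; simp

theorem size_lt_of_uses {A : N} {w : List T} {r' : Res N T} (d' : MatchD G (G.prod A) w r')
    {p : PExp N T} {s : List T} {r : Res N T} (d : MatchD G p s r) (h : d.uses A w) :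
    d'.size < d.size := by
  induction d with
  | var1 d ih | var2 d ih =>
    rcases h with ⟨rfl, rfl⟩ | h
    · obtain ⟨rfl, hd⟩ := unique d' d
      cases hd
      exact Nat.lt_succ_self _
    · exact (ih h).trans (Nat.lt_succ_self _)
  | _ => simp only [uses, size] at h ⊢ <;> grind

theorem not_uses_self {A : N} {s : List T} {r : Res N T} (d : MatchD G (G.prod A) s r) :
    ¬ d.uses A s :=
  fun h => (size_lt_of_uses d d h).false

theorem suffix_of_ok {p : PExp N T} {s s' : List T} {t : PStr N T}
    (d : MatchD G p s (.ok s' t)) : s' <:+ s := by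
  generalize hr : Res.ok s' t = r at d
  induction d generalizing s' t with
  | con1 _ _ ih₁ ih₂ | rep2 _ _ ih₁ ih₂ =>
    cases hr
    exact (ih₂ rfl).trans (ih₁ rfl)
  | var1 _ ih | ord1 _ ih | ord3 _ _ _ ih =>
    cases hr
    exact ih rfl
  | empty1 | not1 | rep1 => cases hr; exact List.suffix_refl _
  | char1 => cases hr; exact List.suffix_cons _ _
  | _ => cases hr

theorem update_eq_none_of_uses [DecidableEq N] [DecidableEq T] {A : N} {s : List T}
    {r : Res N T} (d : MatchD G (G.prod A) s r) {L : Memo N T}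
    (hL : ∀ B w, d.uses B w → L B w = none) (r' : Res N T) :
    ∀ B w, d.uses B w → L.update A s r' B w = none := by
  intro B w h
  have hne : ¬(B = A ∧ w = s) := by
    rintro ⟨rfl, rfl⟩
    exact d.not_uses_self h
  simp only [Memo.update, if_neg hne, hL B w h]

end MatchD

theorem Inc.of_no_progress {N T : Type} [DecidableEq N] [DecidableEq T] {G : PEG N T} {A : N}
    {s s' : List T} {L : Memo N T} {t t' : PStr N T}
    (h : LMatch G (G.prod A) s (L.update A s (.ok s' t)) (.ok s' t')) (hs : s' <:+ s) :
    Inc G A s (L.update A s (.ok s' t)) (.ok s' t) := by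
  obtain ⟨x, rfl⟩ := hs
  simpa using Inc.inc3 (x := x) (y := []) (by simpa using h)

/-- Conservativeness: if `G[p] s ⇝ X` in the original semantics (witnessed by
the proof tree `d`), then `G[p] s L ⇝ X` in the left-recursive extended
semantics, for any memoization table `L` containing no entry `(A, w)` for any
`G[A] w` appearing in `d`. -/
theorem lmatch_conservative {N T : Type} [DecidableEq N] [DecidableEq T]
    (G : PEG N T) (p : PExp N T) (s : List T) (X : Res N T)
    (d : MatchD G p s X) (L : Memo N T)
    (hL : ∀ (A : N) (w : List T), d.uses A w → L A w = none) :
    LMatch G p s L X := by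
  induction d generalizing L with
  | empty1 => exact .empty1
  | char1 => exact .char1
  | char2 hne => exact .char2 hne
  | char3 => exact .char3
  | var1 d ih =>
    have hfresh := d.update_eq_none_of_uses fun B w h => hL B w (.inr h)
    exact .lvar1 (hL _ _ (.inl ⟨rfl, rfl⟩)) (ih _ (hfresh _))
      (.of_no_progress (ih _ (hfresh _)) d.suffix_of_ok)
  | var2 d ih =>
    have hfresh := d.update_eq_none_of_uses fun B w h => hL B w (.inr h)
    exact .lvar2 (hL _ _ (.inl ⟨rfl, rfl⟩)) (ih _ (hfresh _))
  | con1 _ _ ih₁ ih₂ =>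
    exact .con1 (ih₁ L fun A w h => hL A w (.inl h)) (ih₂ L fun A w h => hL A w (.inr h))
  | con2 _ _ ih₁ ih₂ =>
    exact .con2 (ih₁ L fun A w h => hL A w (.inl h)) (ih₂ L fun A w h => hL A w (.inr h))
  | con3 _ ih => exact .con3 (ih L hL)
  | ord1 _ ih => exact .ord1 (ih L hL)
  | ord2 _ _ ih₁ ih₂ =>
    exact .ord2 (ih₁ L fun A w h => hL A w (.inl h)) (ih₂ L fun A w h => hL A w (.inr h))
  | ord3 _ _ ih₁ ih₂ =>
    exact .ord3 (ih₁ L fun A w h => hL A w (.inl h)) (ih₂ L fun A w h => hL A w (.inr h))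
  | not1 _ ih => exact .not1 (ih L hL)
  | not2 _ ih => exact .not2 (ih L hL)
  | rep1 _ ih => exact .rep1 (ih L hL)
  | rep2 _ _ ih₁ ih₂ =>
    exact .rep2 (ih₁ L fun A w h => hL A w (.inl h)) (ih₂ L fun A w h => hL A w (.inr h))
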